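/- Let b ≥ 2, d ≥ 1, n ≥ 1 be integers with d dividing n + 1, let g = gcd(b, d), and let ω ∈ ℂ be a primitive d-th root of unity. Then in the polynomial ring ℂ[t] one has the identity (1 + t + t^2 + ⋯ + t^(b−1)) · (1 − t^d)^((n+1)/d) · ∏_{i=1}^{n} (1 + ω^i t + (ω^i t)^2 + ⋯ + (ω^i t)^(b−1)) = (1 − t^(bd/g))^(g·(n+1)/d). -/

import Mathlib

open Polynomial Finset

/-! Let `ζ` be a primitive `d`-th root of unity and `F i = ∑_{j<b} (ζ^i t)^j`, a `d`-periodic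
function of `i`. Over one period, `∏ (1 - ζ^i t) = 1 - t^d`, and pairing each `F i` with
`1 - ζ^i t` gives `∏ (1 - (ζ^b)^i t^b)`. As `ζ^b` is a primitive `(d/g)`-th root of unity, this
product runs `g` times over its period and equals `(1 - t^(bd/g))^g`. The first factor of the
theorem is `F 0`, so together with `i = 1, …, n` the product covers `(n+1)/d` periods of `F`. -/

theorem Function.Periodic.prod_range_mul {M : Type*} [CommMonoid M] {F : ℕ → M} {d : ℕ}
    (hF : Function.Periodic F d) (m : ℕ) :
    ∏ i ∈ range (d * m), F i = (∏ i ∈ range d, F i) ^ m := by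
  induction m with
  | zero => simp
  | succ m ih =>
    rw [Nat.mul_succ, prod_range_add, ih, pow_succ]
    congr 1
    refine prod_congr rfl fun i _ => ?_
    rw [add_comm, mul_comm]
    exact hF.nat_mul m i

namespace IsPrimitiveRoot

theorem pow_div_gcd {M : Type*} [CommMonoid M] {ζ : M} {d : ℕ} (hζ : IsPrimitiveRoot ζ d)
    (hd : d ≠ 0) (b : ℕ) : IsPrimitiveRoot (ζ ^ b) (d / d.gcd b) := by
  rw [hζ.eq_orderOf, ← (hζ.isOfFinOrder hd).orderOf_pow]
  exact .orderOf _

variable {A : Type*} [CommRing A] [IsDomain A] {ζ : A} {d : ℕ}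

theorem prod_one_sub_pow_mul (hζ : IsPrimitiveRoot ζ d) (hd : 0 < d) (x : A) :
    ∏ i ∈ range d, (1 - ζ ^ i * x) = 1 - x ^ d := by
  simpa [eval_prod] using congrArg (eval 1) (X_pow_sub_C_eq_prod hζ hd (α := x) rfl).symm

theorem one_sub_pow_mul_prod_geom_sum (hζ : IsPrimitiveRoot ζ d) (hd : 0 < d) (x : A) (b : ℕ) :
    (1 - x ^ d) * ∏ i ∈ range d, ∑ j ∈ range b, (ζ ^ i * x) ^ j =
      (1 - x ^ (b * d / d.gcd b)) ^ d.gcd b := by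
  set g := d.gcd b
  have hη : IsPrimitiveRoot (ζ ^ b) (d / g) := hζ.pow_div_gcd hd.ne' b
  have hηper : Function.Periodic (fun i => 1 - (ζ ^ b) ^ i * x ^ b) (d / g) := fun i => by
    simp only [pow_add, hη.pow_eq_one, mul_one]
  have hgd : g ∣ d := Nat.gcd_dvd_left d b
  calc (1 - x ^ d) * ∏ i ∈ range d, ∑ j ∈ range b, (ζ ^ i * x) ^ j
      = ∏ i ∈ range d, (1 - ζ ^ i * x) * ∑ j ∈ range b, (ζ ^ i * x) ^ j := by
        rw [← hζ.prod_one_sub_pow_mul hd, prod_mul_distrib]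
    _ = ∏ i ∈ range (d / g * g), (1 - (ζ ^ b) ^ i * x ^ b) := by
        rw [Nat.div_mul_cancel hgd]
        refine prod_congr rfl fun i _ => ?_
        rw [mul_neg_geom_sum, mul_pow, ← pow_mul, ← pow_mul, mul_comm i b]
    _ = (1 - x ^ (b * d / g)) ^ g := by
        rw [hηper.prod_range_mul, hη.prod_one_sub_pow_mul
          (Nat.div_pos (Nat.gcd_le_left b hd) (Nat.gcd_pos_of_pos_left b hd)),
          ← pow_mul, Nat.mul_div_assoc b hgd]

end IsPrimitiveRoot

theorem stmt_4_general (b d n : ℕ) (hdn : d ∣ (n + 1))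
    (g : ℕ) (hg : g = Nat.gcd b d) (ω : ℂ) (hω : IsPrimitiveRoot ω d) :
    (∑ j ∈ Finset.range b, (X : Polynomial ℂ) ^ j) * (1 - X ^ d) ^ ((n + 1) / d) *
      ∏ i ∈ Finset.Icc 1 n, (∑ j ∈ Finset.range b, C ((ω ^ i) ^ j) * X ^ j) =
    (1 - X ^ (b * d / g)) ^ (g * ((n + 1) / d)) := by
  have hd : 0 < d := Nat.pos_of_dvd_of_pos hdn n.succ_pos
  have hCω : IsPrimitiveRoot (C ω) d := hω.map_of_injective C_injective
  set F : ℕ → ℂ[X] := fun i => ∑ j ∈ range b, (C ω ^ i * X) ^ j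
  have hFper : Function.Periodic F d := fun i => by
    simp only [F, pow_add, hCω.pow_eq_one, mul_one]
  have hFIcc : ∏ i ∈ Icc 1 n, ∑ j ∈ range b, C ((ω ^ i) ^ j) * X ^ j = ∏ i ∈ Icc 1 n, F i :=
    prod_congr rfl fun i _ => by simp only [F, mul_pow, map_pow]
  have hF0 : ∑ j ∈ range b, (X : ℂ[X]) ^ j = F 0 := by simp only [F, pow_zero, one_mul]
  have hFrange : F 0 * ∏ i ∈ Icc 1 n, F i = ∏ i ∈ range (n + 1), F i := by
    rw [range_eq_Ico, prod_eq_prod_Ico_succ_bot n.succ_pos, zero_add, Nat.succ_eq_add_one,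
      Ico_add_one_right_eq_Icc]
  calc _ = (1 - X ^ d) ^ ((n + 1) / d) * (F 0 * ∏ i ∈ Icc 1 n, F i) := by
        rw [hFIcc, hF0]; ring
    _ = ((1 - X ^ d) * ∏ i ∈ range d, F i) ^ ((n + 1) / d) := by
        rw [hFrange, ← Nat.mul_div_cancel' hdn, hFper.prod_range_mul, Nat.mul_div_cancel' hdn,
          mul_pow]
    _ = _ := by
        rw [hCω.one_sub_pow_mul_prod_geom_sum hd, ← pow_mul, hg, Nat.gcd_comm]

/-- **Theorem (Main Theorem, part c, product form).**
If `b ≥ 2`, `d ≥ 1`, `n ≥ 1`, `d ∣ (n+1)`, `g = gcd(b,d)` and `ω` is a primitive `d`th root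
of unity, then `(1 + t + ⋯ + t^(b-1)) · (1 - t^d)^((n+1)/d) ·
  ∏_{i=1}^{n} (1 + ω^i t + ⋯ + (ω^i t)^(b-1)) = (1 - t^(bd/g))^(g·(n+1)/d)` in `ℂ[t]`. -/
theorem stmt_4 (b d n : ℕ) (hb : 2 ≤ b) (hd : 1 ≤ d) (hn : 1 ≤ n) (hdn : d ∣ (n + 1))
    (g : ℕ) (hg : g = Nat.gcd b d) (ω : ℂ) (hω : IsPrimitiveRoot ω d) :
    (∑ j ∈ Finset.range b, (X : Polynomial ℂ) ^ j) * (1 - X ^ d) ^ ((n + 1) / d) *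
      ∏ i ∈ Finset.Icc 1 n, (∑ j ∈ Finset.range b, C ((ω ^ i) ^ j) * X ^ j) =
    (1 - X ^ (b * d / g)) ^ (g * ((n + 1) / d)) :=
  stmt_4_general b d n hdn g hg ω hω
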